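/- arXiv:1307.7641 — 2 statements merged into one kernel-verified Lean document; each statement's English description precedes it below -/
import Mathlib

section
/- Let F ∈ ℤ[t₁,...,t_s], A ∈ ℤ, a ∈ ℤ^s, and let m, ℓ, δ be nonnegative integers with m ≥ 2δ+1 and 0 ≤ δ ≤ m − ℓ. Define R_δ(p^m, A; p^ℓ) as the set of t ∈ (ℤ/p^mℤ)^s with F(t) ≡ A mod p^m, v_p(∇F(t)) = δ, and t ≡ a mod p^ℓ. Then for every k ∈ ℤ/pℤ, #R_δ(p^m, A; p^ℓ)/p^{m(s−1)} = #R_δ(p^{m+1}, A + k p^m; p^ℓ)/p^{(m+1)(s−1)}. -/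
/-- The number of `t ∈ (ℤ/p^mℤ)^s` (represented by integer vectors with entries in
`[0, p^m)`) with `F(t) ≡ A mod p^m`, `v_p(∇F(t)) = δ` and `t ≡ a mod p^ℓ`. -/
noncomputable def gradCount (p s : ℕ) (F : MvPolynomial (Fin s) ℤ) (a : Fin s → ℤ)
    (ℓ δ : ℕ) (m : ℕ) (A : ℤ) : ℕ :=
  Nat.card {t : Fin s → ℤ //
    (∀ i, 0 ≤ t i ∧ t i < (p : ℤ) ^ m) ∧
    ((p : ℤ) ^ m ∣ MvPolynomial.eval t F - A) ∧
    (∀ i, (p : ℤ) ^ δ ∣ MvPolynomial.eval t (MvPolynomial.pderiv i F)) ∧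
    ¬ (∀ i, (p : ℤ) ^ (δ + 1) ∣ MvPolynomial.eval t (MvPolynomial.pderiv i F)) ∧
    (∀ i, (p : ℤ) ^ ℓ ∣ t i - a i)}

/-!
Write `N_k` for the number of points of `R_δ(p^(m+1), A + k p^m; p^ℓ)`. The conditions
`v_p(∇F(t)) = δ` and `t ≡ a mod p^ℓ` only depend on `t mod p^m`, so each point of
`R_δ(p^m, A; p^ℓ)` has `p^s` lifts mod `p^(m+1)`, and these are distributed over the classes
`k mod p`: `∑_k N_k = p^s · #R_δ(p^m, A; p^ℓ)`. It remains to see that all `N_k` are equal.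
Since `v_p(∇F(t)) = δ`, some `w` has `∇F(t) · w ≡ p^δ d mod p^(δ+1)`, and Taylor expansion gives
`F(t + p^(m-δ) w) ≡ F(t) + p^m d mod p^(m+1)`, because `2(m-δ) ≥ m+1`. The shift changes `t`
only mod `p^(m-δ)`, a multiple of `p^(δ+1)` and `p^ℓ`, so it preserves both side conditions;
choosing `w` as a function of `t mod p^(δ+1)` makes it injective, whence `N_k ≤ N_(k+d)`.
-/

open MvPolynomial Finset

namespace MvPolynomial

variable {R σ : Type*} [CommRing R]

theorem dvd_eval_sub_eval {c : R} {x y : σ → R} (h : ∀ i, c ∣ x i - y i)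
    (F : MvPolynomial σ R) : c ∣ eval x F - eval y F := by
  let π := Ideal.Quotient.mk (Ideal.span {c})
  have hxy : π ∘ x = π ∘ y := by
    ext i; exact Ideal.Quotient.eq.2 (Ideal.mem_span_singleton.2 (h i))
  rw [← Ideal.mem_span_singleton, ← Ideal.Quotient.eq, map_eval, map_eval, hxy]

theorem dvd_eval_iff_of_dvd_sub {n c : R} {x y : σ → R} (hn : n ∣ c) (h : ∀ i, c ∣ x i - y i)
    (F : MvPolynomial σ R) : n ∣ eval x F ↔ n ∣ eval y F :=
  dvd_iff_dvd_of_dvd_sub (hn.trans (dvd_eval_sub_eval h F))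

theorem sq_dvd_eval_add_sub_sum_pderiv [Fintype σ] {c : R} (t h : σ → R) (hc : ∀ i, c ∣ h i)
    (F : MvPolynomial σ R) :
    c ^ 2 ∣ eval (t + h) F - eval t F - ∑ i, h i * eval t (pderiv i F) := by
  induction F using MvPolynomial.induction_on with
  | C a => simp
  | add F G hF hG =>
    convert dvd_add hF hG using 1
    simp only [map_add, mul_add, sum_add_distrib]
    ring
  | mul_X F j hF =>
    classical
    have hsum : ∑ i, h i * eval t (pderiv i (F * X j)) =
        (∑ i, h i * eval t (pderiv i F)) * t j + h j * eval t F := by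
      simp only [Derivation.leibniz, pderiv_X, smul_eq_mul, map_add, map_mul, eval_X, mul_add,
        sum_add_distrib, sum_mul]
      rw [add_comm]
      congr 1
      · exact sum_congr rfl fun i _ => by ring
      · simp [Pi.single_apply, mul_comm]
    have hstep : c ∣ eval (t + h) F - eval t F :=
      dvd_eval_sub_eval (fun i => by simpa using hc i) F
    have hsq : c ^ 2 ∣ h j * (eval (t + h) F - eval t F) := by
      rw [sq]; exact mul_dvd_mul (hc j) hstep
    rw [hsum]
    convert dvd_add (hF.mul_right (t j)) hsq using 1
    simp only [map_mul, eval_X, Pi.add_apply]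
    ring

theorem pow_succ_dvd_eval_add_sub [Fintype σ] {p : R} {m δ : ℕ} (hm : 2 * δ + 1 ≤ m)
    (F : MvPolynomial σ R) (t w : σ → R) (d : R)
    (hw : p ^ (δ + 1) ∣ ∑ i, w i * eval t (pderiv i F) - p ^ δ * d) :
    p ^ (m + 1) ∣ eval (t + p ^ (m - δ) • w) F - (eval t F + p ^ m * d) := by
  have htaylor := sq_dvd_eval_add_sub_sum_pderiv t (p ^ (m - δ) • w)
    (fun i => dvd_mul_right _ (w i)) F
  have hsq : p ^ (m + 1) ∣ (p ^ (m - δ)) ^ 2 := by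
    rw [← pow_mul]; exact pow_dvd_pow p (by omega)
  have hlin : p ^ (m + 1) ∣ p ^ (m - δ) * (∑ i, w i * eval t (pderiv i F) - p ^ δ * d) := by
    rw [show m + 1 = m - δ + (δ + 1) by omega, pow_add]; exact mul_dvd_mul_left _ hw
  convert dvd_add (hsq.trans htaylor) hlin using 1
  simp only [Pi.smul_apply, smul_eq_mul, mul_sub, mul_sum, ← mul_assoc, ← pow_add,
    show m - δ + δ = m by omega]
  ring

end MvPolynomial

theorem Int.exists_sum_mul_sub_dvd {σ : Type*} [Fintype σ] {p : ℤ} (hp : Prime p) {δ : ℕ}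
    {g : σ → ℤ} (hδ : ∀ i, p ^ δ ∣ g i) (hg : ¬ ∀ i, p ^ (δ + 1) ∣ g i) (d : ℤ) :
    ∃ w : σ → ℤ, p ^ (δ + 1) ∣ ∑ i, w i * g i - p ^ δ * d := by
  classical
  push Not at hg
  obtain ⟨i, hi⟩ := hg
  obtain ⟨u, hu⟩ := hδ i
  have hpu : ¬ p ∣ u := fun h => hi (by rw [hu, pow_succ]; exact mul_dvd_mul_left _ h)
  obtain ⟨x, y, hxy⟩ := (hp.coprime_iff_not_dvd).2 hpu
  refine ⟨Pi.single i (d * y), -d * x, ?_⟩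
  simp only [Pi.single_apply, ite_mul, zero_mul, sum_ite_eq', mem_univ, if_true, hu]
  linear_combination (p ^ δ * d) * hxy

theorem Int.eq_of_dvd_sub_of_bounds {N x y : ℤ} (h : N ∣ x - y) (hx : 0 ≤ x ∧ x < N)
    (hy : 0 ≤ y ∧ y < N) : x = y := by
  obtain ⟨hx₀, hx₁⟩ := hx
  obtain ⟨hy₀, hy₁⟩ := hy
  have := Int.eq_zero_of_abs_lt_dvd h (abs_sub_lt_iff.2 ⟨by linarith, by linarith⟩)
  linarith

theorem Int.dvd_iff_exists_lt_dvd_sub_mul {N y : ℤ} {n : ℕ} (hn : 0 < n) :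
    N ∣ y ↔ ∃ k < n, N * n ∣ y - k * N := by
  constructor
  · rintro ⟨e, rfl⟩
    have hn' : (0 : ℤ) < n := by exact_mod_cast hn
    have := Int.emod_lt_of_pos e hn'
    refine ⟨(e % n).toNat, by omega, e / n, ?_⟩
    rw [Int.toNat_of_nonneg (Int.emod_nonneg e hn'.ne')]
    linear_combination (-N) * (Int.emod_add_mul_ediv e n)
  · rintro ⟨k, -, h⟩
    simpa using dvd_add ((dvd_mul_right N n).trans h) (dvd_mul_left N k)

theorem Int.eq_of_dvd_sub_mul {N y : ℤ} (hN : N ≠ 0) {n k k' : ℕ} (hk : k < n) (hk' : k' < n)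
    (h : N * n ∣ y - k * N) (h' : N * n ∣ y - k' * N) : k = k' := by
  have hdiff : N * n ∣ N * ((k' : ℤ) - k) := by
    have := dvd_sub h h'
    rwa [show y - k * N - (y - k' * N) = N * ((k' : ℤ) - k) by ring] at this
  have := Int.eq_zero_of_abs_lt_dvd ((mul_dvd_mul_iff_left hN).1 hdiff)
    (abs_sub_lt_iff.2 ⟨by omega, by omega⟩)
  omega

theorem card_filter_dvd_sub_and {α : Type*} [DecidableEq α] (s : Finset α) (f : α → ℤ) (A : ℤ)
    (G : α → Prop) [DecidablePred G] {N : ℤ} (hN : N ≠ 0) {n : ℕ} (hn : 0 < n) :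
    (s.filter fun x => N ∣ f x - A ∧ G x).card =
      ∑ k ∈ range n, (s.filter fun x => N * n ∣ f x - (A + k * N) ∧ G x).card := by
  rw [← card_biUnion]
  · congr 1
    ext x
    simp only [mem_filter, mem_biUnion, mem_range, sub_add_eq_sub_sub]
    rw [Int.dvd_iff_exists_lt_dvd_sub_mul hn]
    constructor
    · rintro ⟨hx, ⟨k, hk, hdvd⟩, hG⟩
      exact ⟨k, hk, hx, hdvd, hG⟩
    · rintro ⟨k, hk, hx, hdvd, hG⟩
      exact ⟨hx, ⟨k, hk, hdvd⟩, hG⟩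
  · intro k hk k' hk' hne
    rw [Function.onFun, disjoint_filter]
    rintro x - ⟨h, -⟩ ⟨h', -⟩
    rw [sub_add_eq_sub_sub] at h h'
    exact hne (Int.eq_of_dvd_sub_mul hN (mem_range.1 hk) (mem_range.1 hk') h h')

section Box

variable {σ : Type*} [Fintype σ] [DecidableEq σ]

variable (σ) in
noncomputable def intBox (N : ℤ) : Finset (σ → ℤ) :=
  Fintype.piFinset fun _ => Finset.Ico (0 : ℤ) N

theorem mem_intBox {N : ℤ} {t : σ → ℤ} : t ∈ intBox σ N ↔ ∀ i, 0 ≤ t i ∧ t i < N := by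
  simp [intBox]

theorem card_intBox (M : ℕ) : (intBox σ M).card = M ^ Fintype.card σ := by
  simp [intBox]

theorem natCard_intBox (N : ℤ) (P : (σ → ℤ) → Prop) [DecidablePred P] :
    Nat.card {t : σ → ℤ // (∀ i, 0 ≤ t i ∧ t i < N) ∧ P t} = ((intBox σ N).filter P).card := by
  rw [← Nat.card_eq_finsetCard]
  exact Nat.card_congr (Equiv.subtypeEquivRight fun t => by simp [mem_intBox])

theorem card_filter_intBox_mul {N : ℤ} (hN : 0 < N) (M : ℕ) {P : (σ → ℤ) → Prop} [DecidablePred P]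
    (hP : ∀ t t', (∀ i, N ∣ t i - t' i) → P t → P t') :
    ((intBox σ (N * M)).filter P).card = ((intBox σ N).filter P).card * M ^ Fintype.card σ := by
  rw [← card_intBox, ← card_product]
  apply card_nbij' (fun t => (fun i => t i % N, fun i => t i / N))
    (fun x i => x.1 i + N * x.2 i)
  · intro t ht
    simp only [coe_filter, coe_product, mem_coe, mem_intBox, Set.mem_ofPred_eq, Set.mem_prod]
      at ht ⊢
    obtain ⟨hbox, hPt⟩ := ht
    refine ⟨⟨fun i => ⟨Int.emod_nonneg _ hN.ne', Int.emod_lt_of_pos _ hN⟩,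
      hP t _ (fun i => Int.dvd_self_sub_emod) hPt⟩,
      fun i => ⟨Int.ediv_nonneg (hbox i).1 hN.le, Int.ediv_lt_of_lt_mul hN ?_⟩⟩
    rw [mul_comm]; exact (hbox i).2
  · rintro ⟨r, u⟩ hru
    simp only [coe_filter, coe_product, mem_coe, mem_intBox, Set.mem_ofPred_eq, Set.mem_prod]
      at hru ⊢
    obtain ⟨⟨hr, hPr⟩, hu⟩ := hru
    refine ⟨fun i => ⟨?_, ?_⟩, hP r _ (fun i => ⟨-u i, by ring⟩) hPr⟩
    · nlinarith [(hr i).1, (hu i).1]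
    · nlinarith [(hr i).2, (hu i).2]
  · intro t _
    ext i
    exact Int.emod_add_mul_ediv (t i) N
  · rintro ⟨r, u⟩ hru
    simp only [coe_filter, coe_product, mem_coe, mem_intBox, Set.mem_ofPred_eq, Set.mem_prod] at hru
    obtain ⟨⟨hr, -⟩, -⟩ := hru
    ext i
    · exact (Int.add_mul_emod_self_left _ _ _).trans (Int.emod_eq_of_lt (hr i).1 (hr i).2)
    · simp [Int.add_mul_ediv_left _ _ hN.ne', Int.ediv_eq_zero_of_lt (hr i).1 (hr i).2]

end Box

section Hensel

variable {σ : Type*} {p : ℤ} {F : MvPolynomial σ ℤ} {a : σ → ℤ} {ℓ δ m : ℕ}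

variable (p F a ℓ δ) in
/-- The conditions `v_p(∇F(t)) = δ` and `t ≡ a mod p^ℓ` in the definition of `R_δ`. -/
def IsAdmissible (t : σ → ℤ) : Prop :=
  (∀ i, p ^ δ ∣ eval t (pderiv i F)) ∧ ¬ (∀ i, p ^ (δ + 1) ∣ eval t (pderiv i F)) ∧
    ∀ i, p ^ ℓ ∣ t i - a i

noncomputable instance [Fintype σ] : DecidablePred (IsAdmissible p F a ℓ δ) := fun _ => by
  unfold IsAdmissible; infer_instance

theorem isAdmissible_iff_of_dvd_sub {c : ℤ} (hδ : p ^ (δ + 1) ∣ c) (hℓ : p ^ ℓ ∣ c)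
    {t t' : σ → ℤ} (h : ∀ i, c ∣ t i - t' i) :
    IsAdmissible p F a ℓ δ t ↔ IsAdmissible p F a ℓ δ t' := by
  have hgrad : ∀ n, n ∣ c → ∀ i, (n ∣ eval t (pderiv i F) ↔ n ∣ eval t' (pderiv i F)) :=
    fun n hn i => dvd_eval_iff_of_dvd_sub hn h _
  unfold IsAdmissible
  simp only [hgrad _ ((pow_dvd_pow p δ.le_succ).trans hδ), hgrad _ hδ]
  refine and_congr_right' (and_congr_right' (forall_congr' fun i => ?_))
  exact dvd_iff_dvd_of_dvd_sub (by rw [sub_sub_sub_cancel_right]; exact hℓ.trans (h i))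

variable [Fintype σ]

variable (p F δ) in
noncomputable def correction (d : ℤ) (t : σ → ℤ) : σ → ℤ :=
  Classical.epsilon fun w =>
    p ^ (δ + 1) ∣ ∑ i, w i * eval (fun j => t j % p ^ (δ + 1)) (pderiv i F) - p ^ δ * d

theorem correction_congr {d : ℤ} {t t' : σ → ℤ} (h : ∀ i, p ^ (δ + 1) ∣ t i - t' i) :
    correction p F δ d t = correction p F δ d t' := by
  have hres : (fun j => t j % p ^ (δ + 1)) = fun j => t' j % p ^ (δ + 1) :=
    funext fun j => (Int.modEq_iff_dvd.2 (h j)).symm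
  simp only [correction, hres]

theorem correction_spec (hp : Prime p) (d : ℤ) {t : σ → ℤ}
    (hδ : ∀ i, p ^ δ ∣ eval t (pderiv i F)) (hδ' : ¬ ∀ i, p ^ (δ + 1) ∣ eval t (pderiv i F)) :
    p ^ (δ + 1) ∣ ∑ i, correction p F δ d t i * eval t (pderiv i F) - p ^ δ * d := by
  set r : σ → ℤ := fun j => t j % p ^ (δ + 1)
  have hr : ∀ j, p ^ (δ + 1) ∣ r j - t j := fun j => dvd_sub_comm.1 Int.dvd_self_sub_emod
  have hgrad : ∀ n, n ∣ p ^ (δ + 1) → ∀ i, (n ∣ eval r (pderiv i F) ↔ n ∣ eval t (pderiv i F)) :=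
    fun n hn i => dvd_eval_iff_of_dvd_sub hn hr _
  have hspec : p ^ (δ + 1) ∣ ∑ i, correction p F δ d t i * eval r (pderiv i F) - p ^ δ * d :=
    Classical.epsilon_spec <| Int.exists_sum_mul_sub_dvd hp (g := fun i => eval r (pderiv i F))
      (fun i => (hgrad _ (pow_dvd_pow _ δ.le_succ) i).2 (hδ i))
      (by simpa only [hgrad _ dvd_rfl] using hδ') d
  refine (dvd_iff_dvd_of_dvd_sub ?_).1 hspec
  rw [sub_sub_sub_cancel_right, ← sum_sub_distrib]
  exact dvd_sum fun i _ => by rw [← mul_sub]; exact (dvd_eval_sub_eval hr _).mul_left _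

variable (p F δ m) in
noncomputable def henselShift (d : ℤ) (t : σ → ℤ) : σ → ℤ :=
  fun i => (t i + p ^ (m - δ) * correction p F δ d t i) % p ^ (m + 1)

theorem henselShift_sub_dvd (d : ℤ) (t : σ → ℤ) (i : σ) :
    p ^ (m - δ) ∣ henselShift p F δ m d t i - t i := by
  set w := correction p F δ d t i
  rw [show henselShift p F δ m d t i - t i =
      p ^ (m - δ) * w - (t i + p ^ (m - δ) * w - henselShift p F δ m d t i) by ring]
  exact dvd_sub (dvd_mul_right _ _) ((pow_dvd_pow p (by omega)).trans Int.dvd_self_sub_emod)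

theorem dvd_eval_henselShift_sub (hp : Prime p) (hm : 2 * δ + 1 ≤ m) (d : ℤ) {t : σ → ℤ}
    (hδ : ∀ i, p ^ δ ∣ eval t (pderiv i F)) (hδ' : ¬ ∀ i, p ^ (δ + 1) ∣ eval t (pderiv i F)) :
    p ^ (m + 1) ∣ eval (henselShift p F δ m d t) F - (eval t F + p ^ m * d) := by
  have hred : p ^ (m + 1) ∣
      eval (henselShift p F δ m d t) F - eval (t + p ^ (m - δ) • correction p F δ d t) F :=
    dvd_eval_sub_eval (fun i => dvd_sub_comm.1 Int.dvd_self_sub_emod) F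
  simpa only [sub_add_sub_cancel] using
    dvd_add hred (pow_succ_dvd_eval_add_sub hm F t _ d (correction_spec hp d hδ hδ'))

theorem henselShift_injOn (hm : 2 * δ + 1 ≤ m) (d : ℤ) :
    Set.InjOn (henselShift p F δ m d) {t | ∀ i, 0 ≤ t i ∧ t i < p ^ (m + 1)} := by
  intro t ht t' ht' h
  have hq : ∀ i, p ^ (δ + 1) ∣ t i - t' i := fun i => by
    have hi : p ^ (m - δ) ∣ henselShift p F δ m d t i - t i := henselShift_sub_dvd d t i
    have hi' : p ^ (m - δ) ∣ henselShift p F δ m d t' i - t' i := henselShift_sub_dvd d t' i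
    rw [h] at hi
    have := dvd_sub hi' hi
    rw [sub_sub_sub_cancel_left] at this
    exact (pow_dvd_pow p (by omega)).trans this
  ext i
  refine Int.eq_of_dvd_sub_of_bounds ?_ (ht i) (ht' i)
  have hi : _ ≡ _ [ZMOD p ^ (m + 1)] := congrFun h i
  rw [correction_congr hq] at hi
  simpa using hi.symm.dvd

end Hensel

section GradCount

variable {p s : ℕ} {F : MvPolynomial (Fin s) ℤ} {a : Fin s → ℤ} {ℓ δ m : ℕ} {A : ℤ}

theorem gradCount_eq_card_filter :
    gradCount p s F a ℓ δ m A = ((intBox (Fin s) ((p : ℤ) ^ m)).filter fun t =>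
      (p : ℤ) ^ m ∣ eval t F - A ∧ IsAdmissible (p : ℤ) F a ℓ δ t).card :=
  natCard_intBox _ fun t => (p : ℤ) ^ m ∣ eval t F - A ∧ IsAdmissible (p : ℤ) F a ℓ δ t

theorem sum_gradCount_succ (hp : 0 < p) (hδ : δ + 1 ≤ m) (hℓ : ℓ ≤ m) :
    ∑ k ∈ range p, gradCount p s F a ℓ δ (m + 1) (A + k * (p : ℤ) ^ m) =
      gradCount p s F a ℓ δ m A * p ^ s := by
  have hpm : (0 : ℤ) < (p : ℤ) ^ m := by positivity
  simp only [gradCount_eq_card_filter, pow_succ]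
  rw [← card_filter_dvd_sub_and _ (fun t => eval t F) A _ hpm.ne' hp,
    card_filter_intBox_mul hpm p, Fintype.card_fin]
  rintro t t' h ⟨hF, hadm⟩
  refine ⟨(dvd_iff_dvd_of_dvd_sub ?_).1 hF,
    (isAdmissible_iff_of_dvd_sub (pow_dvd_pow _ hδ) (pow_dvd_pow _ hℓ) h).1 hadm⟩
  rw [sub_sub_sub_cancel_right]
  exact dvd_eval_sub_eval h F

theorem gradCount_succ_le (hp : p.Prime) (hm : 2 * δ + 1 ≤ m) (hδ : δ + ℓ ≤ m) (k k' : ℤ) :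
    gradCount p s F a ℓ δ (m + 1) (A + k * (p : ℤ) ^ m) ≤
      gradCount p s F a ℓ δ (m + 1) (A + k' * (p : ℤ) ^ m) := by
  have hp' : Prime (p : ℤ) := Nat.prime_iff_prime_int.1 hp
  have hP : (0 : ℤ) < (p : ℤ) ^ (m + 1) := pow_pos (by exact_mod_cast hp.pos) _
  simp only [gradCount_eq_card_filter]
  refine card_le_card_of_injOn (henselShift (p : ℤ) F δ m (k' - k)) (fun t ht => ?_)
    ((henselShift_injOn hm _).mono fun t ht => mem_intBox.1 (mem_filter.1 ht).1)
  simp only [coe_filter, mem_intBox, Set.mem_ofPred_eq] at ht ⊢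
  obtain ⟨-, hF, hadm⟩ := ht
  refine ⟨fun i => ⟨Int.emod_nonneg _ hP.ne', Int.emod_lt_of_pos _ hP⟩, ?_,
    (isAdmissible_iff_of_dvd_sub (c := (p : ℤ) ^ (m - δ)) (pow_dvd_pow _ (by omega))
      (pow_dvd_pow _ (by omega)) fun i => dvd_sub_comm.1 (henselShift_sub_dvd _ t i)).1 hadm⟩
  have hshift := dvd_eval_henselShift_sub hp' hm (k' - k) hadm.1 hadm.2.1
  rw [show eval (henselShift (p : ℤ) F δ m (k' - k) t) F - (A + k' * (p : ℤ) ^ m) =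
    (eval (henselShift (p : ℤ) F δ m (k' - k) t) F - (eval t F + (p : ℤ) ^ m * (k' - k))) +
      (eval t F - (A + k * (p : ℤ) ^ m)) by ring]
  exact dvd_add hshift hF

end GradCount

theorem stmt_2 (p : ℕ) (hp : p.Prime) (s : ℕ)
    (F : MvPolynomial (Fin s) ℤ) (A : ℤ) (a : Fin s → ℤ)
    (m ℓ δ : ℕ) (hm : 2 * δ + 1 ≤ m) (hδ : δ + ℓ ≤ m) :
    ∀ k : ℤ,
      gradCount p s F a ℓ δ (m + 1) (A + k * (p : ℤ) ^ m) =
        p ^ (s - 1) * gradCount p s F a ℓ δ m A := by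
  intro k
  have hconst (k' : ℤ) : gradCount p s F a ℓ δ (m + 1) (A + k' * (p : ℤ) ^ m) =
      gradCount p s F a ℓ δ (m + 1) (A + k * (p : ℤ) ^ m) :=
    (gradCount_succ_le hp hm hδ k' k).antisymm (gradCount_succ_le hp hm hδ k k')
  have hsum := sum_gradCount_succ (F := F) (a := a) (ℓ := ℓ) (δ := δ) (m := m) (A := A)
    hp.pos (by omega) (by omega)
  rw [sum_congr rfl fun (k' : ℕ) _ => hconst k', sum_const, card_range, smul_eq_mul] at hsum
  cases s with
  | zero => simp [gradCount_eq_card_filter, IsAdmissible]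
  | succ s =>
    rw [pow_succ', mul_left_comm] at hsum
    rw [Nat.add_sub_cancel, mul_comm (p ^ s)]
    exact Nat.eq_of_mul_eq_mul_left hp.pos hsum
end

section
/- Let K be a number field of degree n and let r_K(m) be the number of integral ideals of 𝔬_K of norm m. Define the multiplicative 'restricted' function r_res by r_res(p^m) = r_K(p^m) if p ∈ 𝒫₀ ∪ 𝒫₁ and r_res(p^m) = 1 if p ∈ 𝒫₂. Then for all m ∈ ℤ_{>0}: r_K(m) ≤ r_res(m) · Σ_{q} 1_{q | m} τ(q)^n 1_{⟨𝒫₀ ∪ 𝒫₁⟩}(m/q), where the sum runs over square-full q ∈ ⟨𝒫₂⟩ (i.e. q composed only of primes in 𝒫₂ with v_p(q) ≠ 1 for all p). -/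
open NumberField

open scoped Classical

/-- `rK K m` is the number of integral ideals of `𝓞 K` of absolute norm `m`. -/
noncomputable def rK (K : Type) [Field K] [NumberField K] (m : ℕ) : ℕ :=
  Nat.card {I : Ideal (𝓞 K) // Ideal.absNorm I = m}

/-- Primes dividing the discriminant. -/
def P₀ (K : Type) [Field K] [NumberField K] : Set ℕ :=
  {p | p.Prime ∧ (p : ℤ) ∣ NumberField.discr K}

/-- Unramified primes having a prime ideal above them of residue degree one. -/
def P₁ (K : Type) [Field K] [NumberField K] : Set ℕ :=
  {p | p.Prime ∧ ¬ (p : ℤ) ∣ NumberField.discr K ∧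
    ∃ 𝔭 : Ideal (𝓞 K), 𝔭.IsPrime ∧ Ideal.absNorm 𝔭 = p}

/-- Unramified primes all of whose prime ideals have residue degree at least two. -/
def P₂ (K : Type) [Field K] [NumberField K] : Set ℕ :=
  {p | p.Prime ∧ ¬ (p : ℤ) ∣ NumberField.discr K ∧
    ¬ ∃ 𝔭 : Ideal (𝓞 K), 𝔭.IsPrime ∧ Ideal.absNorm 𝔭 = p}

/-- `m ∈ ⟨P⟩`, i.e. all prime factors of `m` lie in `P`. -/
def smoothOver (P : Set ℕ) (m : ℕ) : Prop :=
  ∀ p : ℕ, p.Prime → p ∣ m → p ∈ P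

/-- The multiplicative function `r_res`, agreeing with `r_K` at prime powers of primes
in `P₀ ∪ P₁` and equal to `1` at prime powers of primes in `P₂`. -/
noncomputable def rRes (K : Type) [Field K] [NumberField K] (m : ℕ) : ℕ :=
  m.factorization.prod (fun p e => if p ∈ P₀ K ∪ P₁ K then rK K (p ^ e) else 1)


/-!
`r_K` is multiplicative: for coprime `s`, `q` an ideal `I` of norm `s q` is the product of
`I + (s)` and `I + (q)`, of norms `s` and `q`, and every such product has norm `s q`. An ideal of
norm `p ^ e` is determined by its exponents, each at most `e`, at the at most `n` primes above `p`,
so `r_K(p ^ e) ≤ (e + 1) ^ n`; and `r_K(p) = 0` for `p ∈ 𝒫₂`, as an ideal of prime norm is prime.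
Splitting off the `𝒫₂`-part `q` of `m` gives `r_K(m) = r_res(m) r_K(q)`. Then `r_K(q) ≤ τ(q) ^ n`,
`r_K(q) = 0` unless `q` is square-full, and `q` is one of the indices of the sum.
-/

theorem Nat.Coprime.eq_of_mul_eq_of_dvd_pow {a b s q d : ℕ} (hsq : s.Coprime q)
    (ha : a ∣ s ^ d) (hb : b ∣ q ^ d) (h : a * b = s * q) : a = s := by
  have has : a ∣ s :=
    (Nat.Coprime.coprime_dvd_left ha (hsq.pow_left d)).dvd_of_dvd_mul_right ⟨b, h.symm⟩
  have hsa : s ∣ a :=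
    (Nat.Coprime.coprime_dvd_right hb (hsq.pow_right d)).dvd_of_dvd_mul_right ⟨q, h ▸ rfl⟩
  exact Nat.dvd_antisymm has hsa

theorem UniqueFactorizationMonoid.card_le_pow_card_of_count_le {α : Type*}
    [CommMonoidWithZero α] [NormalizationMonoid α] [UniqueFactorizationMonoid α]
    [Subsingleton αˣ] {P : α → Prop} (T : Finset α) (e : ℕ) (h0 : ∀ a, P a → a ≠ 0)
    (hT : ∀ a, P a → ∀ x ∈ normalizedFactors a, x ∈ T)
    (he : ∀ a, P a → ∀ x, (normalizedFactors a).count x ≤ e) :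
    Nat.card {a // P a} ≤ (e + 1) ^ T.card := by
  let exponents (a : {a // P a}) (x : T) : Fin (e + 1) :=
    ⟨(normalizedFactors a.1).count x.1, Nat.lt_succ_of_le (he a a.2 x)⟩
  have hinj : Function.Injective exponents := by
    rintro ⟨a, ha⟩ ⟨b, hb⟩ hab
    have hfac : normalizedFactors a = normalizedFactors b := by
      ext x
      by_cases hx : x ∈ T
      · exact congrArg Fin.val (congrFun hab ⟨x, hx⟩)
      · rw [Multiset.count_eq_zero_of_notMem (fun h => hx (hT a ha x h)),
          Multiset.count_eq_zero_of_notMem (fun h => hx (hT b hb x h))]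
    exact Subtype.ext (associated_iff_eq.1 ((prod_normalizedFactors (h0 a ha)).symm.trans
      (hfac ▸ prod_normalizedFactors (h0 b hb))))
  simpa using Nat.card_le_card_of_injective exponents hinj

namespace Ideal

theorem sup_mul_sup_eq_self {R : Type*} [CommRing R] {I J J' : Ideal R} (h : J ⊔ J' = ⊤)
    (hle : J * J' ≤ I) : (I ⊔ J) * (I ⊔ J') = I := by
  refine le_antisymm ?_ ?_
  · rw [sup_mul, mul_sup, mul_sup]
    exact sup_le (sup_le mul_le_right mul_le_left) (sup_le mul_le_right hle)
  · have hcop : (I ⊔ J) ⊔ (I ⊔ J') = ⊤ :=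
      eq_top_iff.2 (h ▸ sup_le_sup le_sup_right le_sup_right)
    rw [mul_eq_inf_of_coprime hcop]
    exact le_inf le_sup_left le_sup_left

theorem span_natCast_sup_span_natCast {R : Type*} [CommRing R] {s q : ℕ} (hsq : s.Coprime q) :
    span {(s : R)} ⊔ span {(q : R)} = ⊤ :=
  isCoprime_iff_sup_eq.1 ((isCoprime_span_singleton_iff _ _).2 hsq.cast)

section AbsNorm

open UniqueFactorizationMonoid

variable {S : Type*} [CommRing S] [IsDedekindDomain S] [Module.Free ℤ S]

theorem sup_span_natCast_mul_sup_span_natCast {s q : ℕ} (hsq : s.Coprime q) {I : Ideal S}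
    (hI : absNorm I = s * q) : (I ⊔ span {(s : S)}) * (I ⊔ span {(q : S)}) = I := by
  refine sup_mul_sup_eq_self (span_natCast_sup_span_natCast hsq) ?_
  rw [span_singleton_mul_span_singleton, span_singleton_le_iff_mem, ← Nat.cast_mul, ← hI]
  exact absNorm_mem I

theorem absNorm_sup_span_natCast_of_absNorm_eq_mul [Module.Finite ℤ S] {s q : ℕ}
    (hsq : s.Coprime q) {I : Ideal S} (hI : absNorm I = s * q) :
    absNorm (I ⊔ span {(s : S)}) = s := by
  refine hsq.eq_of_mul_eq_of_dvd_pow (d := Module.finrank ℤ S)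
    (b := absNorm (I ⊔ span {(q : S)})) ?_ ?_ ?_
  · exact absNorm_span_natCast (S := S) s ▸ absNorm_dvd_absNorm_of_le le_sup_right
  · exact absNorm_span_natCast (S := S) q ▸ absNorm_dvd_absNorm_of_le le_sup_right
  · rw [← map_mul, sup_span_natCast_mul_sup_span_natCast hsq hI, hI]

theorem mul_sup_span_natCast_of_coprime {s q : ℕ} (hsq : s.Coprime q) {A B : Ideal S}
    (hA : absNorm A = s) (hB : absNorm B = q) : A * B ⊔ span {(s : S)} = A := by
  have hsA : span {(s : S)} ≤ A := hA ▸ span_singleton_absNorm_le A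
  have hsB : span {(s : S)} ⊔ B = ⊤ :=
    eq_top_iff.2 ((span_natCast_sup_span_natCast (R := S) hsq).symm ▸
      sup_le_sup_left (hB ▸ span_singleton_absNorm_le B) _)
  rw [sup_comm, mul_comm, sup_mul_eq_of_coprime_left hsB, sup_eq_right.2 hsA]

noncomputable def absNormMulEquiv [Module.Finite ℤ S] {s q : ℕ} (hsq : s.Coprime q) :
    {I : Ideal S // absNorm I = s * q} ≃
      {A : Ideal S // absNorm A = s} × {B : Ideal S // absNorm B = q} where
  toFun I := (⟨I ⊔ span {(s : S)}, absNorm_sup_span_natCast_of_absNorm_eq_mul hsq I.2⟩,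
    ⟨I ⊔ span {(q : S)},
      absNorm_sup_span_natCast_of_absNorm_eq_mul hsq.symm (I.2.trans (mul_comm s q))⟩)
  invFun AB := ⟨AB.1 * AB.2, by rw [map_mul, AB.1.2, AB.2.2]⟩
  left_inv I := Subtype.ext (sup_span_natCast_mul_sup_span_natCast hsq I.2)
  right_inv AB := Prod.ext (Subtype.ext (mul_sup_span_natCast_of_coprime hsq AB.1.2 AB.2.2))
    (Subtype.ext (mul_comm AB.1.1 AB.2.1 ▸ mul_sup_span_natCast_of_coprime hsq.symm AB.2.2 AB.1.2))

theorem card_absNorm_eq_mul [Module.Finite ℤ S] {s q : ℕ} (hsq : s.Coprime q) :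
    Nat.card {I : Ideal S // absNorm I = s * q} =
      Nat.card {A : Ideal S // absNorm A = s} * Nat.card {B : Ideal S // absNorm B = q} := by
  rw [Nat.card_congr (absNormMulEquiv hsq), Nat.card_prod]

theorem ne_bot_of_absNorm_eq_pow [Module.Finite ℤ S] {p e : ℕ} (hp : p ≠ 0) {I : Ideal S}
    (hI : absNorm I = p ^ e) : I ≠ ⊥ := by
  rw [Ne, ← absNorm_eq_zero_iff, hI]
  exact pow_ne_zero e hp

theorem prime_dvd_absNorm_of_le {p e : ℕ} (hp : p.Prime) {I Q : Ideal S}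
    (hI : absNorm I = p ^ e) (hQ : Q.IsPrime) (hIQ : I ≤ Q) : p ∣ absNorm Q := by
  obtain ⟨i, -, hi⟩ := (Nat.dvd_prime_pow hp).1 (hI ▸ absNorm_dvd_absNorm_of_le hIQ)
  rcases i with _ | i
  · exact absurd (absNorm_eq_one_iff.1 (by simpa using hi)) hQ.ne_top
  · exact hi ▸ dvd_pow_self p i.succ_ne_zero

theorem count_normalizedFactors_le_of_absNorm_eq_prime_pow [Module.Finite ℤ S] {p e : ℕ}
    (hp : p.Prime) {I : Ideal S} (hI : absNorm I = p ^ e) (Q : Ideal S) :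
    (normalizedFactors I).count Q ≤ e := by
  by_cases hQ : Q ∈ normalizedFactors I
  · have hI0 := ne_bot_of_absNorm_eq_pow hp.ne_zero hI
    have hQI : Q ^ (normalizedFactors I).count Q ∣ I := by
      apply pow_dvd_of_le_emultiplicity
      rw [emultiplicity_eq_count_normalizedFactors (irreducible_of_normalized_factor Q hQ) hI0,
        normalize_eq]
    obtain ⟨hQprime, hIQ⟩ := (mem_normalizedFactors_iff hI0).1 hQ
    refine (Nat.pow_dvd_pow_iff_le_right hp.one_lt).1 <|
      (pow_dvd_pow_of_dvd (prime_dvd_absNorm_of_le hp hI hQprime hIQ) _).trans ?_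
    rw [← map_pow, ← hI]
    exact map_dvd absNorm hQI
  · rw [Multiset.count_eq_zero_of_notMem hQ]
    exact Nat.zero_le e

theorem mem_normalizedFactors_span_of_absNorm_eq_prime_pow [Module.Finite ℤ S] {p e : ℕ}
    (hp : p.Prime) {I : Ideal S} (hI : absNorm I = p ^ e) {Q : Ideal S}
    (hQ : Q ∈ normalizedFactors I) : Q ∈ normalizedFactors (span {(p : S)}) := by
  obtain ⟨hQprime, hIQ⟩ := (mem_normalizedFactors_iff (ne_bot_of_absNorm_eq_pow hp.ne_zero hI)).1 hQ
  have hpQ : (p : S) ∈ Q := hQprime.mem_of_pow_mem e <| by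
    rw [← Nat.cast_pow, ← hI]
    exact hIQ (absNorm_mem I)
  rw [mem_normalizedFactors_iff (ne_bot_of_absNorm_eq_pow hp.ne_zero (absNorm_span_natCast p))]
  exact ⟨hQprime, (span_singleton_le_iff_mem _).2 hpQ⟩

theorem card_normalizedFactors_span_natCast_le [Module.Finite ℤ S] {p : ℕ} (hp : p.Prime) :
    Multiset.card (normalizedFactors (span {(p : S)})) ≤ Module.finrank ℤ S := by
  have hnorm := absNorm_span_natCast (S := S) p
  have hspan := ne_bot_of_absNorm_eq_pow hp.ne_zero hnorm
  refine (Nat.pow_le_pow_iff_right hp.one_lt).1 ?_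
  calc p ^ Multiset.card (normalizedFactors (span {(p : S)}))
      ≤ ((normalizedFactors (span {(p : S)})).map absNorm).prod := by
        rw [← Multiset.card_map absNorm]
        refine Multiset.pow_card_le_prod fun n hn => ?_
        obtain ⟨Q, hQ, rfl⟩ := Multiset.mem_map.1 hn
        obtain ⟨hQprime, hQle⟩ := (mem_normalizedFactors_iff hspan).1 hQ
        have hQ0 : absNorm Q ≠ 0 := fun h => hspan (le_bot_iff.1 (absNorm_eq_zero_iff.1 h ▸ hQle))
        exact Nat.le_of_dvd (Nat.pos_of_ne_zero hQ0) (prime_dvd_absNorm_of_le hp hnorm hQprime hQle)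
    _ = p ^ Module.finrank ℤ S := by
        rw [← map_multiset_prod, prod_normalizedFactors_eq_self hspan, hnorm]

theorem card_absNorm_eq_prime_pow_le [Module.Finite ℤ S] {p : ℕ} (hp : p.Prime) (e : ℕ) :
    Nat.card {I : Ideal S // absNorm I = p ^ e} ≤ (e + 1) ^ Module.finrank ℤ S := by
  calc Nat.card {I : Ideal S // absNorm I = p ^ e}
      ≤ (e + 1) ^ (normalizedFactors (span {(p : S)})).toFinset.card :=
        card_le_pow_card_of_count_le _ e (fun _ hI => ne_bot_of_absNorm_eq_pow hp.ne_zero hI)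
          (fun _ hI _ hQ => Multiset.mem_toFinset.2
            (mem_normalizedFactors_span_of_absNorm_eq_prime_pow hp hI hQ))
          fun _ hI => count_normalizedFactors_le_of_absNorm_eq_prime_pow hp hI
    _ ≤ (e + 1) ^ Module.finrank ℤ S :=
        Nat.pow_le_pow_right e.succ_pos
          ((Multiset.toFinset_card_le _).trans (card_normalizedFactors_span_natCast_le hp))

end AbsNorm

end Ideal

section SmoothPart

variable (P : Set ℕ) (m : ℕ)

noncomputable def smoothPart : ℕ := (m.factorization.filter (· ∈ P)).prod (· ^ ·)

theorem factorization_smoothPart :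
    (smoothPart P m).factorization = m.factorization.filter (· ∈ P) :=
  Nat.prod_pow_factorization_eq_self fun _ hp =>
    Nat.prime_of_mem_primeFactors (Finset.filter_subset _ _ hp)

theorem smoothPart_ne_zero : smoothPart P m ≠ 0 :=
  Finset.prod_ne_zero_iff.2 fun _ hp =>
    pow_ne_zero _ (Nat.prime_of_mem_primeFactors (Finset.filter_subset _ _ hp)).ne_zero

theorem smoothOver_smoothPart : smoothOver P (smoothPart P m) := fun p hp hpq => by
  have hmem : p ∈ (smoothPart P m).primeFactors :=
    Nat.mem_primeFactors.2 ⟨hp, hpq, smoothPart_ne_zero P m⟩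
  rw [← Nat.support_factorization, factorization_smoothPart, Finsupp.support_filter,
    Finset.mem_filter] at hmem
  exact hmem.2

theorem smoothPart_mul_smoothPart_compl (hm : m ≠ 0) : smoothPart P m * smoothPart Pᶜ m = m := by
  simp only [smoothPart, Set.mem_compl_iff]
  exact (Finsupp.prod_filter_mul_prod_filter_not (· ∈ P) _ _).trans
    (Nat.prod_factorization_pow_eq_self hm)

theorem prod_factorization_smoothPart {M : Type*} [CommMonoid M] (g : ℕ → ℕ → M) :
    (smoothPart P m).factorization.prod g =
      m.factorization.prod fun p k => if p ∈ P then g p k else 1 := by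
  rw [factorization_smoothPart, Finsupp.prod_filter_index, Finsupp.support_filter,
    Finset.prod_filter, Finsupp.prod]

end SmoothPart

section IdealCount

variable (K : Type) [Field K] [NumberField K]

theorem rK_one : rK K 1 = 1 := by
  rw [rK, Nat.card_eq_one_iff_unique]
  refine ⟨⟨fun I J => Subtype.ext ?_⟩, ⟨⟨⊤, Ideal.absNorm_top⟩⟩⟩
  rw [Ideal.absNorm_eq_one_iff.1 I.2, Ideal.absNorm_eq_one_iff.1 J.2]

theorem rK_mul {s q : ℕ} (hsq : s.Coprime q) : rK K (s * q) = rK K s * rK K q :=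
  Ideal.card_absNorm_eq_mul hsq

theorem rK_eq_prod_factorization {m : ℕ} (hm : m ≠ 0) :
    rK K m = m.factorization.prod fun p k => rK K (p ^ k) :=
  Nat.multiplicative_factorization _ (fun _ _ => rK_mul K) (rK_one K) hm

theorem rK_prime_pow_le {p : ℕ} (hp : p.Prime) (k : ℕ) :
    rK K (p ^ k) ≤ (k + 1) ^ Module.finrank ℚ K :=
  RingOfIntegers.rank K ▸ Ideal.card_absNorm_eq_prime_pow_le hp k

theorem rK_le_card_divisors_pow {m : ℕ} (hm : m ≠ 0) :
    rK K m ≤ m.divisors.card ^ Module.finrank ℚ K := by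
  rw [rK_eq_prod_factorization K hm, Nat.card_divisors hm, ← Finset.prod_pow]
  exact Finset.prod_le_prod' fun p hp => rK_prime_pow_le K (Nat.prime_of_mem_primeFactors hp) _

theorem rK_eq_zero_of_mem_P₂ {p : ℕ} (hp : p ∈ P₂ K) : rK K p = 0 := by
  rw [rK, Nat.card_eq_zero]
  refine Or.inl ⟨fun I => hp.2.2 ⟨I.1, Ideal.isPrime_of_irreducible_absNorm ?_, I.2⟩⟩
  rw [I.2]
  exact hp.1

theorem rK_eq_zero_of_mem_P₂_of_not_sq_dvd {p m : ℕ} (hp : p ∈ P₂ K) (hpm : p ∣ m)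
    (hp2 : ¬ p ^ 2 ∣ m) : rK K m = 0 := by
  obtain ⟨r, rfl⟩ := hpm
  have hpr : ¬ p ∣ r := fun h => hp2 (sq p ▸ mul_dvd_mul_left p h)
  rw [rK_mul K ((Nat.Prime.coprime_iff_not_dvd hp.1).2 hpr), rK_eq_zero_of_mem_P₂ K hp, zero_mul]

theorem mem_P₀_union_P₁_iff {p : ℕ} (hp : p.Prime) : p ∈ P₀ K ∪ P₁ K ↔ p ∉ P₂ K := by
  by_cases hd : (p : ℤ) ∣ discr K <;> simp [P₀, P₁, P₂, hp, hd]

theorem rK_eq_rRes_mul_rK_smoothPart {m : ℕ} (hm : m ≠ 0) :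
    rK K m = rRes K m * rK K (smoothPart (P₂ K) m) := by
  rw [rK_eq_prod_factorization K hm, rK_eq_prod_factorization K (smoothPart_ne_zero _ m),
    prod_factorization_smoothPart, rRes, ← Finsupp.prod_mul]
  refine Finsupp.prod_congr fun p hp => ?_
  have := mem_P₀_union_P₁_iff K (Nat.prime_of_mem_primeFactors hp)
  split_ifs <;> simp_all

end IdealCount

theorem stmt_19 (K : Type) [Field K] [NumberField K] (m : ℕ) (hm : 0 < m) :
    rK K m ≤ rRes K m *
      ∑ q ∈ m.divisors,
        (if (∀ p : ℕ, p.Prime → p ∣ q → p ^ 2 ∣ q) ∧ smoothOver (P₂ K) q ∧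
            smoothOver (P₀ K ∪ P₁ K) (m / q)
         then q.divisors.card ^ (Module.finrank ℚ K) else 0) := by
  set q := smoothPart (P₂ K) m
  have hqm : q * smoothPart (P₂ K)ᶜ m = m := smoothPart_mul_smoothPart_compl _ _ hm.ne'
  have hq : q ∈ m.divisors := Nat.mem_divisors.2 ⟨Dvd.intro _ hqm, hm.ne'⟩
  have hmq : smoothOver (P₀ K ∪ P₁ K) (m / q) := by
    rw [← hqm, Nat.mul_div_cancel_left _ (Nat.pos_of_ne_zero (smoothPart_ne_zero _ _))]
    exact fun p hp hpd => (mem_P₀_union_P₁_iff K hp).2 (smoothOver_smoothPart _ _ p hp hpd)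
  rw [rK_eq_rRes_mul_rK_smoothPart K hm.ne']
  refine Nat.mul_le_mul_left _ ?_
  by_cases hfull : ∀ p : ℕ, p.Prime → p ∣ q → p ^ 2 ∣ q
  · refine (rK_le_card_divisors_pow K (smoothPart_ne_zero _ _)).trans
      (le_of_eq_of_le ?_ (Finset.single_le_sum (fun _ _ => Nat.zero_le _) hq))
    exact (if_pos ⟨hfull, smoothOver_smoothPart _ _, hmq⟩).symm
  · push Not at hfull
    obtain ⟨p, hp, hpq, hp2⟩ := hfull
    rw [rK_eq_zero_of_mem_P₂_of_not_sq_dvd K (smoothOver_smoothPart _ _ p hp hpq) hpq hp2]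
    exact Nat.zero_le _
end
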